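/- arXiv:1608.02444 — 4 statements merged into one kernel-verified Lean document; each statement's English description precedes it below -/
import Mathlib

section
/- The ten matrices u_0, u_1, u_2, u_3 together with the six commutators [u_a,u_b] for 0 ≤ a < b ≤ 3 span the real vector space sp(2) of quaternionic anti-Hermitian 2×2 matrices (which has real dimension 10). -/
open Quaternion Matrix

/-- The real Lie algebra `sp(2)` of quaternionic anti-Hermitian 2×2 matrices. -/
def sp2 : Submodule ℝ (Matrix (Fin 2) (Fin 2) ℍ[ℝ]) where
  carrier := {A | Aᴴ = -A}
  zero_mem' := by simp
  add_mem' := by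
    intro a b ha hb
    simp only [Set.mem_setOf_eq] at *
    rw [Matrix.conjTranspose_add, ha, hb]; abel
  smul_mem' := by
    intro c A hA
    simp only [Set.mem_setOf_eq] at *
    refine Matrix.ext fun i j => ?_
    have h : star (A j i) = -(A i j) := by
      have := congrFun (congrFun hA i) j
      simpa [Matrix.conjTranspose_apply] using this
    simp only [Matrix.conjTranspose_apply, Matrix.smul_apply, Matrix.neg_apply,
      Quaternion.star_smul, h, smul_neg]

/-!
Every generator lies in `sp2` because `sp2` is closed under commutators. Conversely, an element
of `sp2` is `offDiag β + diag(p, q)` with `p`, `q` purely imaginary. The `u_a = offDiag e_a`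
(for `e_a = 1, i, j, k`) span the off-diagonal part, while `[u_0, u_e] = 2 diag(e, -e)` and
`[u_f, u_g] = ±2 diag(e, e)` for `{e, f, g} = {i, j, k}`; together these give every
`diag(a e, b e)` with `a, b` real.
-/

namespace Quaternion

variable {R : Type*} [CommRing R]

@[simps] def i : ℍ[R] := ⟨0, 1, 0, 0⟩

@[simps] def j : ℍ[R] := ⟨0, 0, 1, 0⟩

@[simps] def k : ℍ[R] := ⟨0, 0, 0, 1⟩

@[simp] theorem star_i : star (i : ℍ[R]) = -i := by ext <;> simp

@[simp] theorem star_j : star (j : ℍ[R]) = -j := by ext <;> simp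

@[simp] theorem star_k : star (k : ℍ[R]) = -k := by ext <;> simp

theorem j_mul_k_sub_k_mul_j : (j : ℍ[R]) * k - k * j = (2 : R) • i := by
  ext <;> simp; ring

theorem i_mul_k_sub_k_mul_i : (i : ℍ[R]) * k - k * i = (-2 : R) • j := by
  ext <;> simp; ring

theorem i_mul_j_sub_j_mul_i : (i : ℍ[R]) * j - j * i = (2 : R) • k := by
  ext <;> simp; ring

end Quaternion

theorem Matrix.fin_two_diag_smul_mem {K M : Type*} [Field K] [CharZero K] [AddCommGroup M]
    [Module K M] {V : Submodule K (Matrix (Fin 2) (Fin 2) M)} {c : M}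
    (h₁ : !![c, 0; 0, -c] ∈ V) (h₂ : !![c, 0; 0, c] ∈ V) (a b : K) :
    !![a • c, 0; 0, b • c] ∈ V := by
  have h : !![a • c, 0; 0, b • c] =
      ((a + b) / 2) • !![c, 0; 0, c] + ((a - b) / 2) • !![c, 0; 0, -c] := by
    refine Matrix.ext fun r s => ?_
    fin_cases r <;> fin_cases s <;> simp <;> module
  rw [h]
  exact add_mem (V.smul_mem _ h₂) (V.smul_mem _ h₁)

namespace sp2

variable {A B : Matrix (Fin 2) (Fin 2) ℍ[ℝ]}

theorem mem_iff : A ∈ sp2 ↔ Aᴴ = -A := Iff.rfl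

theorem commutator_mem (hA : A ∈ sp2) (hB : B ∈ sp2) : A * B - B * A ∈ sp2 := by
  rw [mem_iff, conjTranspose_sub, conjTranspose_mul, conjTranspose_mul, mem_iff.mp hA,
    mem_iff.mp hB]
  noncomm_ring

noncomputable def offDiag (β : ℍ[ℝ]) : Matrix (Fin 2) (Fin 2) ℍ[ℝ] := !![0, β; -star β, 0]

theorem offDiag_mem (β : ℍ[ℝ]) : offDiag β ∈ sp2 := by
  rw [mem_iff]
  refine Matrix.ext fun r s => ?_
  fin_cases r <;> fin_cases s <;> simp [offDiag]

theorem offDiag_of_star_eq_neg {β : ℍ[ℝ]} (hβ : star β = -β) : offDiag β = !![0, β; β, 0] := by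
  rw [offDiag, hβ, neg_neg]

theorem re_eq_zero_and_eq_offDiag_add_of_mem (hA : A ∈ sp2) :
    (A 0 0).re = 0 ∧ (A 1 1).re = 0 ∧ A = offDiag (A 0 1) + !![A 0 0, 0; 0, A 1 1] := by
  have h r s : star (A s r) = -A r s := congrFun (congrFun (mem_iff.mp hA) r) s
  refine ⟨star_eq_neg.mp (h 0 0), star_eq_neg.mp (h 1 1), ?_⟩
  rw [offDiag, of_add_of]
  conv_lhs => rw [eta_fin_two A]
  simp [h 1 0]

theorem offDiag_eq_sum (β : ℍ[ℝ]) :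
    offDiag β = β.re • offDiag 1 + β.imI • offDiag i + β.imJ • offDiag j + β.imK • offDiag k := by
  refine Matrix.ext fun r s => ?_
  fin_cases r <;> fin_cases s <;> ext <;> simp [offDiag]

theorem offDiag_commutator (x y : ℍ[ℝ]) :
    offDiag x * offDiag y - offDiag y * offDiag x =
      !![y * star x - x * star y, 0; 0, star y * x - star x * y] := by
  refine Matrix.ext fun r s => ?_
  fin_cases r <;> fin_cases s <;> simp [offDiag] <;> abel

theorem diag_smul_mem_of_commutator_mem {V : Submodule ℝ (Matrix (Fin 2) (Fin 2) ℍ[ℝ])}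
    {e f g : ℍ[ℝ]} {c : ℝ} (hc : c ≠ 0) (he : star e = -e) (hf : star f = -f)
    (hg : star g = -g) (hfg : f * g - g * f = c • e)
    (h₁ : offDiag 1 * offDiag e - offDiag e * offDiag 1 ∈ V)
    (h₂ : offDiag f * offDiag g - offDiag g * offDiag f ∈ V) (a b : ℝ) :
    !![a • e, 0; 0, b • e] ∈ V := by
  rw [offDiag_commutator] at h₁ h₂
  refine fin_two_diag_smul_mem ((V.smul_mem_iff (two_ne_zero (α := ℝ))).1 ?_)
    ((V.smul_mem_iff hc).1 ?_) a b
  · convert h₁ using 1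
    refine Matrix.ext fun r s => ?_
    fin_cases r <;> fin_cases s <;> simp [he, two_smul, sub_eq_add_neg]
  · convert h₂ using 1
    refine Matrix.ext fun r s => ?_
    fin_cases r <;> fin_cases s <;> simp [hf, hg, ← hfg] <;> abel

theorem diag_eq_sum {p q : ℍ[ℝ]} (hp : p.re = 0) (hq : q.re = 0) :
    !![p, 0; 0, q] = !![p.imI • i, 0; 0, q.imI • i] + !![p.imJ • j, 0; 0, q.imJ • j] +
      !![p.imK • k, 0; 0, q.imK • k] := by
  refine Matrix.ext fun r s => ?_
  fin_cases r <;> fin_cases s <;> ext <;> simp [hp, hq]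

end sp2

open sp2 Submodule

theorem stmt2 :
    let qi : ℍ[ℝ] := ⟨0, 1, 0, 0⟩
    let qj : ℍ[ℝ] := ⟨0, 0, 1, 0⟩
    let qk : ℍ[ℝ] := ⟨0, 0, 0, 1⟩
    let u0 : Matrix (Fin 2) (Fin 2) ℍ[ℝ] := !![0, 1; -1, 0]
    let u1 : Matrix (Fin 2) (Fin 2) ℍ[ℝ] := !![0, qi; qi, 0]
    let u2 : Matrix (Fin 2) (Fin 2) ℍ[ℝ] := !![0, qj; qj, 0]
    let u3 : Matrix (Fin 2) (Fin 2) ℍ[ℝ] := !![0, qk; qk, 0]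
    Submodule.span ℝ
      ({u0, u1, u2, u3,
        u0 * u1 - u1 * u0, u0 * u2 - u2 * u0, u0 * u3 - u3 * u0,
        u1 * u2 - u2 * u1, u1 * u3 - u3 * u1, u2 * u3 - u3 * u2} :
        Set (Matrix (Fin 2) (Fin 2) ℍ[ℝ])) = sp2 := by
  intro qi qj qk u0 u1 u2 u3
  have hu0 : u0 = offDiag 1 := by simp [u0, offDiag]
  have hu1 : u1 = offDiag i := (offDiag_of_star_eq_neg star_i).symm
  have hu2 : u2 = offDiag j := (offDiag_of_star_eq_neg star_j).symm
  have hu3 : u3 = offDiag k := (offDiag_of_star_eq_neg star_k).symm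
  rw [hu0, hu1, hu2, hu3]
  apply le_antisymm
  · rw [span_le]
    rintro _ (rfl | rfl | rfl | rfl | rfl | rfl | rfl | rfl | rfl | rfl) <;>
      first | exact offDiag_mem _ | exact commutator_mem (offDiag_mem _) (offDiag_mem _)
  · intro A hA
    obtain ⟨hp, hq, hA⟩ := re_eq_zero_and_eq_offDiag_add_of_mem hA
    rw [hA, diag_eq_sum hp hq, offDiag_eq_sum (A 0 1)]
    refine add_mem (add_mem (add_mem (add_mem ?_ ?_) ?_) ?_) (add_mem (add_mem ?_ ?_) ?_)
    iterate 4 exact smul_mem _ _ (subset_span (by simp))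
    · exact diag_smul_mem_of_commutator_mem two_ne_zero star_i star_j star_k
        j_mul_k_sub_k_mul_j (subset_span (by simp)) (subset_span (by simp)) _ _
    · exact diag_smul_mem_of_commutator_mem (by norm_num) star_j star_i star_k
        i_mul_k_sub_k_mul_i (subset_span (by simp)) (subset_span (by simp)) _ _
    · exact diag_smul_mem_of_commutator_mem two_ne_zero star_k star_i star_j
        i_mul_j_sub_j_mul_i (subset_span (by simp)) (subset_span (by simp)) _ _
end

section
/- Let v ∈ ℍ, v ≠ 0, and let a ∈ ℍ with conj(a) = -a. Set θ_a = conj(v)·a·v - a and b_a = -(v·θ_a)/(2|v|²). Then conj(b_a)·v - conj(v)·b_a = θ_a, i.e. (a, b_a) solves the equation conj(v)·a·v - a = conj(b)·v - conj(v)·b. -/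
/-!
Conjugation by `v` preserves skew-adjointness, so `θ` is purely imaginary. For such `θ`,
`star v * v = normSq v` gives `star (v * θ) * v = -(normSq v • θ)` and
`star v * (v * θ) = normSq v • θ`; hence `star b * v` and `-(star v * b)` both equal `θ / 2`.
-/

open Quaternion

namespace Quaternion

variable {R : Type*}

theorem star_mul_mul_self_eq_smul [CommRing R] (v θ : ℍ[R]) :
    star v * (v * θ) = normSq v • θ := by
  rw [← mul_assoc, star_mul_self, coe_mul_eq_smul]

theorem star_mul_mul_eq_neg_smul_of_mem_skewAdjoint [CommRing R] {θ : ℍ[R]}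
    (hθ : θ ∈ skewAdjoint ℍ[R]) (v : ℍ[R]) :
    star (v * θ) * v = -(normSq v • θ) := by
  rw [star_mul, skewAdjoint.mem_iff.mp hθ, neg_mul, neg_mul, mul_assoc, star_mul_self,
    mul_coe_eq_smul]

theorem star_smul_mul_sub_star_mul_smul_of_mem_skewAdjoint [Field R] {v θ : ℍ[R]}
    (hv : 2 * normSq v ≠ 0) (hθ : θ ∈ skewAdjoint ℍ[R]) :
    star (-((2 * normSq v)⁻¹ • (v * θ))) * v - star v * -((2 * normSq v)⁻¹ • (v * θ)) = θ := by
  rw [star_neg, star_smul, neg_mul, smul_mul_assoc, star_mul_mul_eq_neg_smul_of_mem_skewAdjoint hθ,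
    mul_neg, mul_smul_comm, star_mul_mul_self_eq_smul, smul_neg, neg_neg, sub_neg_eq_add,
    ← two_smul R, smul_smul, smul_smul, mul_right_comm, mul_inv_cancel₀ hv, one_smul]

end Quaternion

theorem stmt6 (v : ℍ[ℝ]) (hv : v ≠ 0) (a : ℍ[ℝ]) (ha : star a = -a) :
    let θ : ℍ[ℝ] := star v * a * v - a
    let b : ℍ[ℝ] := -((2 * normSq v)⁻¹ • (v * θ))
    star b * v - star v * b = θ := by
  have ha_skew : a ∈ skewAdjoint ℍ[ℝ] := skewAdjoint.mem_iff.mpr ha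
  exact star_smul_mul_sub_star_mul_smul_of_mem_skewAdjoint
    (mul_ne_zero two_ne_zero (normSq_ne_zero.mpr hv))
    (sub_mem (skewAdjoint.conjugate' ha_skew v) ha_skew)
end

section
/- Let v = v₀+v₁i ∈ ℂ with v₁ ≠ 0 and v² ≠ -1. Then the two complex 2×2 matrices S(v) = [[1, (v-|v|²conj(v))/(2|v|²)],[(v-|v|²conj(v))/(2|v|²), -1]] and T(v) (with entries t₁₁ = (1+|v|²)v(1+conj(v)²)/(|v|²(conj(v)-v)), t₁₂ = 2(1+|v|²)(1+conj(v)²)/((1-conj(v)²)(v-conj(v))), t₂₁ = t₁₂ by symmetry, t₂₂ = -t₁₁) are linearly independent over ℂ. -/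
/-! Comparing the first rows, `S` and `T` are independent as soon as the minor `t₁₂ - t₁₁ s₁₂` is
nonzero. With `c = conj v` and `|v|² = v c` it factors as
`-(1 + |v|²)(1 + c²)³ / (2 c² (1 - c²)(c - v))`, and every factor is nonzero because `Im v ≠ 0`
and `v² ≠ -1`. -/

open Complex Matrix

theorem LinearIndependent.pair_of_det_ne_zero {R M : Type*} [CommRing R] [NoZeroDivisors R]
    [AddCommGroup M] [Module R M] {x y : M} (φ ψ : M →ₗ[R] R)
    (h : φ x * ψ y - φ y * ψ x ≠ 0) : LinearIndependent R ![x, y] := by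
  refine LinearIndependent.pair_iff.2 fun a b hab => ?_
  have hφ : a * φ x + b * φ y = 0 := by simpa using congrArg φ hab
  have hψ : a * ψ x + b * ψ y = 0 := by simpa using congrArg ψ hab
  have ha : a * (φ x * ψ y - φ y * ψ x) = 0 := by linear_combination ψ y * hφ - φ y * hψ
  have hb : b * (φ x * ψ y - φ y * ψ x) = 0 := by linear_combination φ x * hψ - ψ x * hφ
  exact ⟨(mul_eq_zero.1 ha).resolve_right h, (mul_eq_zero.1 hb).resolve_right h⟩

theorem Matrix.linearIndependent_pair_of_entry_det_ne_zero {R m n : Type*} [CommRing R]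
    [NoZeroDivisors R] {A B : Matrix m n R} (i : m) (j : n) (k : m) (l : n)
    (h : A i j * B k l - B i j * A k l ≠ 0) : LinearIndependent R ![A, B] :=
  LinearIndependent.pair_of_det_ne_zero (entryLinearMap R R i j) (entryLinearMap R R k l) h

theorem t12_sub_t11_mul_s12_eq {K : Type*} [Field K] [NeZero (2 : K)] {v c n : K} (hv : v ≠ 0)
    (hc : c ≠ 0) (hc2 : 1 - c ^ 2 ≠ 0) (hcv : c - v ≠ 0) (hn : n = v * c) :
    2 * (1 + n) * (1 + c ^ 2) / ((1 - c ^ 2) * (v - c))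
        - (1 + n) * v * (1 + c ^ 2) / (n * (c - v)) * ((v - n * c) / (2 * n))
      = -((1 + n) * (1 + c ^ 2) ^ 3 / (2 * c ^ 2 * (1 - c ^ 2) * (c - v))) := by
  have hvc : v - c ≠ 0 := fun h => hcv (by linear_combination -h)
  subst hn
  field_simp
  ring

theorem Complex.one_sub_sq_ne_zero {z : ℂ} (hz : z.im ≠ 0) : 1 - z ^ 2 ≠ 0 := by
  intro h
  have : (z - 1) * (z + 1) = 0 := by linear_combination -h
  rcases mul_eq_zero.1 this with h | h <;> exact hz (by simpa using congrArg im h)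

theorem Complex.one_add_normSq_ne_zero (z : ℂ) : 1 + (normSq z : ℂ) ≠ 0 := by
  exact_mod_cast (by linarith [normSq_nonneg z] : (0:ℝ) < 1 + normSq z).ne'

theorem stmt10 (v : ℂ) (hv : v.im ≠ 0) (hv2 : v ^ 2 ≠ -1) :
    let cv : ℂ := starRingEnd ℂ v
    let nv : ℂ := (Complex.normSq v : ℂ)
    let s12 : ℂ := (v - nv * cv) / (2 * nv)
    let t11 : ℂ := (1 + nv) * v * (1 + cv ^ 2) / (nv * (cv - v))
    let t12 : ℂ := 2 * (1 + nv) * (1 + cv ^ 2) / ((1 - cv ^ 2) * (v - cv))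
    let S : Matrix (Fin 2) (Fin 2) ℂ := !![1, s12; s12, -1]
    let T : Matrix (Fin 2) (Fin 2) ℂ := !![t11, t12; t12, -t11]
    LinearIndependent ℂ ![S, T] := by
  intro cv nv s12 t11 t12 S T
  have hcv : cv.im ≠ 0 := by simpa [cv] using hv
  have hnv : nv = v * cv := by simp [nv, cv, mul_conj]
  have hcv2 : 1 + cv ^ 2 ≠ 0 := fun h =>
    hv2 (by simpa [cv] using congrArg (starRingEnd ℂ) (eq_neg_of_add_eq_zero_right h))
  have hcvv : cv - v ≠ 0 := sub_ne_zero.2 fun h => hv (conj_eq_iff_im.1 h)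
  have hv0 : v ≠ 0 := fun h => hv (by simp [h])
  have hcv0 : cv ≠ 0 := fun h => hcv (by simp [h])
  have hcv1 := one_sub_sq_ne_zero hcv
  have hminor : t12 - t11 * s12
      = -((1 + nv) * (1 + cv ^ 2) ^ 3 / (2 * cv ^ 2 * (1 - cv ^ 2) * (cv - v))) :=
    t12_sub_t11_mul_s12_eq hv0 hcv0 hcv1 hcvv hnv
  refine Matrix.linearIndependent_pair_of_entry_det_ne_zero (A := S) (B := T) 0 0 0 1 ?_
  change 1 * t12 - t11 * s12 ≠ 0
  rw [one_mul, hminor, neg_ne_zero]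
  exact div_ne_zero (mul_ne_zero (one_add_normSq_ne_zero v) (pow_ne_zero 3 hcv2))
    (by simp [hcv0, hcv1, hcvv])
end

section
/- Let w = a + b·j ∈ ℍ with a,b ∈ ℂ, |a|²+|b|² = 1/2, and suppose |a|² - |b|² ≠ 1/4. If μ is a purely imaginary quaternion and d₁ ∈ ℝ satisfy w·μ·conj(w) = μ/4 - (i·μ·i)/4 - (d₁/2)·i, together with the conditions: (from separating real equations) μ = -(d₁i + d₂j + d₃k) for some d₂,d₃ ∈ ℝ and w·μ·conj(w) = -d₁·i, then μ = 0 and d₁ = 0. -/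
/-!
Conjugation `x ↦ w * x * star w` is inverted, up to the factor `normSq w ^ 2 = 1/4`, by
`y ↦ star w * y * w`. Applied to `w * μ * star w = -d₁ i` this gives `μ = -4 d₁ (star w * i * w)`,
whose `i`-component reads `-d₁ = -4 d₁ (|a|² - |b|²)`. As `|a|² - |b|² ≠ 1/4`, `d₁ = 0`,
and then `μ = 0`.
-/

open Quaternion

namespace Quaternion

variable {R : Type*} [CommRing R]

theorem star_mul_mul_mul_star_mul (w x : ℍ[R]) :
    star w * (w * x * star w) * w = (normSq w ^ 2) • x := by
  calc star w * (w * x * star w) * w = (star w * w) * x * (star w * w) := by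
        simp only [mul_assoc]
    _ = (normSq w ^ 2) • x := by
        rw [star_mul_self, coe_mul_eq_smul, mul_coe_eq_smul, smul_smul, sq]

theorem imI_star_mul_mul_of_re_imJ_imK_eq_zero (w x : ℍ[R]) (hre : x.re = 0)
    (hJ : x.imJ = 0) (hK : x.imK = 0) :
    (star w * x * w).imI = x.imI * (w.re ^ 2 + w.imI ^ 2 - w.imJ ^ 2 - w.imK ^ 2) := by
  simp only [imI_mul, re_mul, imJ_mul, imK_mul, re_star, imI_star, imJ_star, imK_star,
    hre, hJ, hK]
  ring

end Quaternion

theorem Complex.normSq_add_normSq_eq_normSq_quaternion (a b : ℂ) :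
    normSq a + normSq b = Quaternion.normSq (⟨a.re, a.im, b.re, b.im⟩ : ℍ[ℝ]) := by
  erw [Quaternion.normSq_def']
  simp only [Complex.normSq_apply]
  ring

theorem stmt14_general (a b : ℂ) (hab : Complex.normSq a + Complex.normSq b = 1 / 2)
    (hne : Complex.normSq a - Complex.normSq b ≠ 1 / 4)
    (μ : ℍ[ℝ]) (d1 d2 d3 : ℝ)
    (h2 : let qi : ℍ[ℝ] := ⟨0, 1, 0, 0⟩
          let qj : ℍ[ℝ] := ⟨0, 0, 1, 0⟩
          let qk : ℍ[ℝ] := ⟨0, 0, 0, 1⟩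
          μ = -(d1 • qi + d2 • qj + d3 • qk))
    (h3 : let qi : ℍ[ℝ] := ⟨0, 1, 0, 0⟩
          let w : ℍ[ℝ] := ⟨a.re, a.im, b.re, b.im⟩
          w * μ * star w = -(d1 • qi)) :
    μ = 0 ∧ d1 = 0 := by
  extract_lets i w at h3
  -- `extract_lets` reuses `i` for the second copy of `qi`
  extract_lets j k at h2
  have hi : i.re = 0 ∧ i.imI = 1 ∧ i.imJ = 0 ∧ i.imK = 0 := ⟨rfl, rfl, rfl, rfl⟩
  have hwc : w.re = a.re ∧ w.imI = a.im ∧ w.imJ = b.re ∧ w.imK = b.im := ⟨rfl, rfl, rfl, rfl⟩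
  have hμI : μ.imI = -d1 := by
    simp [h2, hi, show j.imI = 0 from rfl, show k.imI = 0 from rfl]
  have hw : normSq w = 1 / 2 := (Complex.normSq_add_normSq_eq_normSq_quaternion a b).symm.trans hab
  have hμ := star_mul_mul_mul_star_mul w μ
  rw [h3, hw] at hμ
  have hconjI := imI_star_mul_mul_of_re_imJ_imK_eq_zero w (-(d1 • i))
    (by simp [hi]) (by simp [hi]) (by simp [hi])
  rw [hμ, imI_smul, hμI] at hconjI
  have hd1 : d1 * (1 / 4 - (Complex.normSq a - Complex.normSq b)) = 0 := by
    simp only [imI_neg, imI_smul, hi, hwc, smul_eq_mul] at hconjI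
    rw [Complex.normSq_apply, Complex.normSq_apply]
    linear_combination -hconjI
  obtain rfl : d1 = 0 :=
    (mul_eq_zero.mp hd1).resolve_right (sub_ne_zero.mpr (Ne.symm hne))
  refine ⟨?_, rfl⟩
  simpa using hμ.symm

theorem stmt14 (a b : ℂ) (hab : Complex.normSq a + Complex.normSq b = 1 / 2)
    (hne : Complex.normSq a - Complex.normSq b ≠ 1 / 4)
    (μ : ℍ[ℝ]) (hμ : μ.re = 0) (d1 d2 d3 : ℝ)
    (h1 : let qi : ℍ[ℝ] := ⟨0, 1, 0, 0⟩
          let w : ℍ[ℝ] := ⟨a.re, a.im, b.re, b.im⟩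
          w * μ * star w =
            (4 : ℝ)⁻¹ • μ - (4 : ℝ)⁻¹ • (qi * μ * qi) - (d1 / 2) • qi)
    (h2 : let qi : ℍ[ℝ] := ⟨0, 1, 0, 0⟩
          let qj : ℍ[ℝ] := ⟨0, 0, 1, 0⟩
          let qk : ℍ[ℝ] := ⟨0, 0, 0, 1⟩
          μ = -(d1 • qi + d2 • qj + d3 • qk))
    (h3 : let qi : ℍ[ℝ] := ⟨0, 1, 0, 0⟩
          let w : ℍ[ℝ] := ⟨a.re, a.im, b.re, b.im⟩
          w * μ * star w = -(d1 • qi)) :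
    μ = 0 ∧ d1 = 0 :=
  stmt14_general a b hab hne μ d1 d2 d3 h2 h3
end
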